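/- In the lazy tournament of a trivalent tree, if a label j wins the first round in which it competes, then j wins all subsequent rounds in which it competes (Winners Lemma). -/

import Mathlib

open SimpleGraph

/-- A candidate leaf-labeled graph on vertex set `Fin V` with `L` labeled leaves. -/
structure PreTree (L V : ℕ) where
  adj : Fin V → Fin V → Bool
  symm' : ∀ u v, adj u v = adj v u
  loopless' : ∀ v, adj v v = false
  leaf : Fin L → Fin V

def PreTree.G {L V : ℕ} (T : PreTree L V) : SimpleGraph (Fin V) where
  Adj u v := T.adj u v = true
  symm := ⟨fun u v h => by show T.adj v u = true; rw [T.symm']; exact h⟩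
  loopless := ⟨fun v h => by change T.adj v v = true at h; rw [T.loopless' v] at h; exact Bool.noConfusion h⟩

instance {L V : ℕ} (T : PreTree L V) : DecidableRel T.G.Adj :=
  fun u v => inferInstanceAs (Decidable (T.adj u v = true))

/-- `T` is a trivalent tree with leaves labeled bijectively by `Fin L`. -/
def PreTree.IsTrivalent {L V : ℕ} (T : PreTree L V) : Prop :=
  T.G.IsTree ∧ (∀ v, T.G.degree v = 1 ∨ T.G.degree v = 3) ∧
    Function.Injective T.leaf ∧ (∀ i, T.G.degree (T.leaf i) = 1) ∧
    (∀ v, T.G.degree v = 1 → ∃ i, T.leaf i = v)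

/-- Label-preserving isomorphism of leaf-labeled graphs. -/
def PreTree.Iso {L V : ℕ} (T T' : PreTree L V) : Prop :=
  ∃ σ : Fin V ≃ Fin V, (∀ u v, T'.adj (σ u) (σ v) = T.adj u v) ∧ ∀ i, σ (T.leaf i) = T'.leaf i

/-- Leaves `a = 0` and `b = 1` share a common (internal) vertex. -/
def PreTree.ABAdj {n V : ℕ} (T : PreTree (n+3) V) : Prop :=
  ∃ v, T.G.Adj (T.leaf 0) v ∧ T.G.Adj (T.leaf 1) v

/-- Number of isomorphism classes of leaf-labeled graphs satisfying `P`. -/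
noncomputable def classCount {L V : ℕ} (P : PreTree L V → Prop) : ℕ :=
  Nat.card (Quot fun (T T' : {T : PreTree L V // P T}) => PreTree.Iso T.1 T'.1)

/-- `w` separates `x` from `y` in `G`: every walk from `x` to `y` passes through `w`. -/
def Separates {V : Type*} (G : SimpleGraph V) (w x y : V) : Prop :=
  ∀ p : G.Walk x y, w ∈ p.support

/-- The laziness rule applies: the unlabeled edge `E` is adjacent to a labeled
edge carrying a label `u ≠ j` with `u > i`. -/
def LazyApplies {n : ℕ} (T : PreTree (n+3) (2*n+4))
    (lab : Sym2 (Fin (2*n+4)) → Option (Fin (n+3)))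
    (E : Sym2 (Fin (2*n+4))) (i j : Fin (n+3)) : Prop :=
  ∃ (e : Sym2 (Fin (2*n+4))) (u : Fin (n+3)) (v : Fin (2*n+4)),
    e ∈ T.G.edgeSet ∧ v ∈ e ∧ v ∈ E ∧ e ≠ E ∧ lab e = some u ∧ u ≠ j ∧ i < u

/-- A run of the lazy tournament on a tree with `n+3` leaves (labels ordered
`a = 0 < b = 1 < c = 2 < 1 = 3 < ⋯ < n = n+2` as elements of `Fin (n+3)`).
`lab t` is the edge labeling before round `t`; round `t` has `loser t < winner t`
on adjacent labeled edges `loserE t`, `winnerE t` sharing vertex `vtx t` with the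
unlabeled edge `newE t`, the pair having the maximal smaller label, and `newE t`
gets labeled according to the laziness rule. -/
structure Run (n : ℕ) (T : PreTree (n+3) (2*n+4)) where
  lab : ℕ → Sym2 (Fin (2*n+4)) → Option (Fin (n+3))
  loser : Fin n → Fin (n+3)
  winner : Fin n → Fin (n+3)
  loserE : Fin n → Sym2 (Fin (2*n+4))
  winnerE : Fin n → Sym2 (Fin (2*n+4))
  newE : Fin n → Sym2 (Fin (2*n+4))
  vtx : Fin n → Fin (2*n+4)
  init_leaf : ∀ (i : Fin (n+3)) (w : Fin (2*n+4)), T.G.Adj (T.leaf i) w →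
    lab 0 s(T.leaf i, w) = some i
  init_other : ∀ e : Sym2 (Fin (2*n+4)), (∀ i : Fin (n+3), T.leaf i ∉ e) → lab 0 e = none
  init_nonedge : ∀ e, e ∉ T.G.edgeSet → lab 0 e = none
  lt_lw : ∀ t, loser t < winner t
  loserE_mem : ∀ t, loserE t ∈ T.G.edgeSet
  winnerE_mem : ∀ t, winnerE t ∈ T.G.edgeSet
  newE_mem : ∀ t, newE t ∈ T.G.edgeSet
  lab_loserE : ∀ t, lab t.1 (loserE t) = some (loser t)
  lab_winnerE : ∀ t, lab t.1 (winnerE t) = some (winner t)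
  vtx_mem : ∀ t, vtx t ∈ loserE t ∧ vtx t ∈ winnerE t ∧ vtx t ∈ newE t
  edges_distinct : ∀ t, loserE t ≠ winnerE t ∧ loserE t ≠ newE t ∧ winnerE t ≠ newE t
  newE_unlabeled : ∀ t, lab t.1 (newE t) = none
  max_rule : ∀ (t : Fin n) (e1 e2 e3 : Sym2 (Fin (2*n+4))) (i j : Fin (n+3)) (v : Fin (2*n+4)),
    e1 ∈ T.G.edgeSet → e2 ∈ T.G.edgeSet → e3 ∈ T.G.edgeSet →
    lab t.1 e1 = some i → lab t.1 e2 = some j → lab t.1 e3 = none → i < j →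
    v ∈ e1 → v ∈ e2 → v ∈ e3 → e1 ≠ e2 → e1 ≠ e3 → e2 ≠ e3 →
    i ≤ loser t
  step_lazy : ∀ t : Fin n, LazyApplies T (lab t.1) (newE t) (loser t) (winner t) →
    lab (t.1+1) (newE t) = some (loser t)
  step_nonlazy : ∀ t : Fin n, ¬ LazyApplies T (lab t.1) (newE t) (loser t) (winner t) →
    lab (t.1+1) (newE t) = some (winner t)
  step_frame : ∀ (t : Fin n) (e : Sym2 (Fin (2*n+4))), e ≠ newE t → lab (t.1+1) e = lab t.1 e

/-- Number of rounds won by label `i`. -/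
def Run.wins {n : ℕ} {T : PreTree (n+3) (2*n+4)} (R : Run n T) (i : Fin (n+3)) : ℕ :=
  (Finset.univ.filter fun t : Fin n => R.winner t = i).card

/-- The element of `Fin (n+3)` corresponding to the numeric label `m+1 ∈ {1,…,n}`. -/
def lbl {n : ℕ} (m : Fin n) : Fin (n+3) := ⟨(m:ℕ)+3, by omega⟩

/-- `T ∈ Tour(k₁,…,kₙ)`. -/
def InTour {n : ℕ} (k : Fin n → ℕ) (T : PreTree (n+3) (2*n+4)) : Prop :=
  T.IsTrivalent ∧ T.ABAdj ∧ ∃ R : Run n T, ∀ m : Fin n, R.wins (lbl m) = k m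

/-- `|Tour(k₁,…,kₙ)|` (isomorphism classes). -/
noncomputable def TourCount {n : ℕ} (k : Fin n → ℕ) : ℕ := classCount (InTour k)

/-- `T'` is obtained from `T` by deleting the largest leaf and suppressing
the resulting degree-2 vertex `w`. -/
def DelLast (n : ℕ) (T : PreTree ((n+1)+3) (2*(n+1)+4)) (T' : PreTree (n+3) (2*n+4)) : Prop :=
  ∃ (g : Fin (2*n+4) → Fin (2*(n+1)+4)) (w : Fin (2*(n+1)+4)),
    Function.Injective g ∧
    T.G.Adj (T.leaf (Fin.last (n+3))) w ∧
    (∀ v, v ∈ Set.range g ↔ (v ≠ T.leaf (Fin.last (n+3)) ∧ v ≠ w)) ∧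
    (∀ u u' : Fin (2*n+4), T'.G.Adj u u' ↔
      (T.G.Adj (g u) (g u') ∨ (T.G.Adj (g u) w ∧ T.G.Adj (g u') w ∧ g u ≠ g u'))) ∧
    (∀ i : Fin (n+3), g (T'.leaf i) = T.leaf (Fin.castSucc i))

/-- `T'` is obtained from `T` by successively deleting the leaves `r+1, …, n`. -/
inductive Restricts : (n : ℕ) → (r : ℕ) → PreTree (n+3) (2*n+4) → PreTree (r+3) (2*r+4) → Prop
  | refl (n : ℕ) (T : PreTree (n+3) (2*n+4)) : Restricts n n T T
  | step (n r : ℕ) (T : PreTree ((n+1)+3) (2*(n+1)+4)) (T1 : PreTree (n+3) (2*n+4))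
      (T2 : PreTree (r+3) (2*r+4)) :
      DelLast n T T1 → Restricts n r T1 T2 → Restricts (n+1) r T T2

/-- The composition `k̃_j`: decrement `k j` and delete position `dpos`
(the rightmost zero of the result). -/
def tilde {n : ℕ} (k : Fin (n+1) → ℕ) (dpos : ℕ) (j : Fin (n+1)) : Fin n → ℕ :=
  fun m => if (m:ℕ) < dpos then Function.update k j (k j - 1) (Fin.castSucc m)
           else Function.update k j (k j - 1) (Fin.succ m)

/-- The map `π_lazy` relates `T` to the pair `(j, T')` where `j` is the winner of the
first round of the tournament, the two leaves that competed are deleted (the shared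
vertex becoming a new leaf) and the labels are shifted according to the (non)lazy case. -/
def PiLazyRel (n : ℕ) (k : Fin (n+1) → ℕ) (T : PreTree ((n+1)+3) (2*(n+1)+4))
    (j : Fin (n+1)) (T' : PreTree (n+3) (2*n+4)) : Prop :=
  ∃ (R : Run (n+1) T) (g : Fin (2*n+4) → Fin (2*(n+1)+4)),
    (∀ m : Fin (n+1), R.wins (lbl m) = k m) ∧
    R.winner ⟨0, Nat.succ_pos n⟩ = lbl j ∧
    Function.Injective g ∧
    (∀ v, v ∈ Set.range g ↔
      (v ≠ T.leaf (R.loser ⟨0, Nat.succ_pos n⟩) ∧ v ≠ T.leaf (R.winner ⟨0, Nat.succ_pos n⟩))) ∧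
    (∀ u u' : Fin (2*n+4), T'.G.Adj u u' ↔ T.G.Adj (g u) (g u')) ∧
    (if k j = 1 then
      ∀ β : Fin (n+3), g (T'.leaf β) =
        (if (β:ℕ) = ((R.loser ⟨0, Nat.succ_pos n⟩) : ℕ) then R.vtx ⟨0, Nat.succ_pos n⟩
         else if (β:ℕ) < ((R.winner ⟨0, Nat.succ_pos n⟩) : ℕ) then T.leaf (Fin.castSucc β)
         else T.leaf (Fin.succ β))
     else
      ∀ β : Fin (n+3), g (T'.leaf β) =
        (if (β:ℕ) < ((R.loser ⟨0, Nat.succ_pos n⟩) : ℕ) then T.leaf (Fin.castSucc β)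
         else if (β:ℕ)+1 = ((R.winner ⟨0, Nat.succ_pos n⟩) : ℕ) then R.vtx ⟨0, Nat.succ_pos n⟩
         else T.leaf (Fin.succ β)))

/-! ### Parking functions.
A parking function of size `n` is encoded by `col : Fin n → Fin n`, where `col x` is the
(0-indexed) column of the label `x+1`; the Dyck path condition (for paths from `(0,n)` to
`(n,0)` staying weakly above the diagonal, cells left of down steps) is `IsPF`. -/

def IsPF {n : ℕ} (col : Fin n → Fin n) : Prop :=
  ∀ j : Fin n, n - (j:ℕ) ≤ (Finset.univ.filter fun x => j ≤ col x).card

/-- Dominance index of label `x+1`: the number of columns strictly to its right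
containing no entry greater than `x+1` (empty columns count). -/
def domIdx {n : ℕ} (col : Fin n → Fin n) (x : Fin n) : ℕ :=
  (Finset.univ.filter fun j : Fin n => col x < j ∧ ∀ y, col y = j → y ≤ x).card

/-- Column-restricted: `x > d_x` for all labels `x` (label `x : Fin n` has value `x+1`). -/
def ColRes {n : ℕ} (col : Fin n → Fin n) : Prop := ∀ x : Fin n, domIdx col x < (x:ℕ) + 1

/-- Number of labels in column `j`. -/
def colCount {n : ℕ} (col : Fin n → Fin n) (j : Fin n) : ℕ :=
  (Finset.univ.filter fun x => col x = j).card

/-- `col'` is the image of `col` under the map `r`: remove the row containing the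
label `1`, decrement the remaining labels, and delete the rightmost empty column `E`. -/
def RSpec {n : ℕ} (col : Fin (n+1) → Fin (n+1)) (col' : Fin n → Fin n) : Prop :=
  ∃ E : Fin (n+1),
    (∀ y : Fin (n+1), y ≠ 0 → col y ≠ E) ∧
    (∀ j : Fin (n+1), (∀ y, y ≠ 0 → col y ≠ j) → j ≤ E) ∧
    (∀ x : Fin n, (col' x : ℕ) =
      if (col (Fin.succ x) : ℕ) < (E:ℕ) then (col (Fin.succ x) : ℕ)
      else (col (Fin.succ x) : ℕ) - 1)

/-- `col` is the parking function `τ(T)`: column `col m` contains label `m+1`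
iff the label `col m + 1` wins round `m+1` of the lazy tournament of `T`. -/
def TauRel {n : ℕ} (T : PreTree (n+3) (2*n+4)) (col : Fin n → Fin n) : Prop :=
  ∃ R : Run n T, ∀ t : Fin n, ((R.winner t) : ℕ) = (col t : ℕ) + 3

/-! Losers never increase from one round to the next. If both competing edges of round `t+1`
were already labeled before round `t`, they formed a candidate pair at round `t`, so the
maximality rule bounds `loser (t+1)` by `loser t`. Otherwise round `t` created one of them,
next to the other one, and the laziness rule forces `loser (t+1) ≤ loser t` as well. Hence a
label `j` that has won round `t₀` cannot lose a later round `t`, since that would give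
`j = loser t ≤ loser t₀ < winner t₀ = j`. -/

namespace Run

variable {n : ℕ} {T : PreTree (n+3) (2*n+4)} (R : Run n T)

theorem lab_succ_newE (σ : Fin n) :
    R.lab (σ.1 + 1) (R.newE σ) = some (R.loser σ) ∨
      (R.lab (σ.1 + 1) (R.newE σ) = some (R.winner σ) ∧
        ¬ LazyApplies T (R.lab σ.1) (R.newE σ) (R.loser σ) (R.winner σ)) := by
  by_cases hlazy : LazyApplies T (R.lab σ.1) (R.newE σ) (R.loser σ) (R.winner σ)
  · exact .inl (R.step_lazy σ hlazy)
  · exact .inr ⟨R.step_nonlazy σ hlazy, hlazy⟩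

variable {R}

theorem loser_le_of_newE_eq_loserE {σ ρ : Fin n} (hρ : ρ.1 = σ.1 + 1)
    (hE : R.newE σ = R.loserE ρ) : R.loser ρ ≤ R.loser σ := by
  obtain ⟨hvL, hvW, -⟩ := R.vtx_mem ρ
  obtain ⟨hLW, -, -⟩ := R.edges_distinct ρ
  have hL : R.lab (σ.1 + 1) (R.newE σ) = some (R.loser ρ) := hρ ▸ hE ▸ R.lab_loserE ρ
  have hW : R.lab σ.1 (R.winnerE ρ) = some (R.winner ρ) := by
    rw [← R.step_frame σ _ (hE ▸ hLW.symm), ← hρ, R.lab_winnerE]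
  rcases R.lab_succ_newE σ with hlazy | ⟨hnonlazy, hnot⟩
  · exact (Option.some_injective _ (hL.symm.trans hlazy)).le
  · have hwσ : R.winner σ = R.loser ρ := Option.some_injective _ (hnonlazy.symm.trans hL)
    exact absurd ⟨R.winnerE ρ, R.winner ρ, R.vtx ρ, R.winnerE_mem ρ, hvW, hE ▸ hvL,
      hE ▸ hLW.symm, hW, hwσ ▸ (R.lt_lw ρ).ne',
      (R.lt_lw σ).trans (hwσ ▸ R.lt_lw ρ)⟩ hnot

theorem loser_le_of_newE_eq_winnerE {σ ρ : Fin n} (hρ : ρ.1 = σ.1 + 1)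
    (hE : R.newE σ = R.winnerE ρ) : R.loser ρ ≤ R.loser σ := by
  obtain ⟨hvL, hvW, -⟩ := R.vtx_mem ρ
  obtain ⟨hLW, -, -⟩ := R.edges_distinct ρ
  have hW : R.lab (σ.1 + 1) (R.newE σ) = some (R.winner ρ) := hρ ▸ hE ▸ R.lab_winnerE ρ
  have hL : R.lab σ.1 (R.loserE ρ) = some (R.loser ρ) := by
    rw [← R.step_frame σ _ (hE ▸ hLW), ← hρ, R.lab_loserE]
  rcases R.lab_succ_newE σ with hlazy | ⟨hnonlazy, hnot⟩
  · exact (Option.some_injective _ (hW.symm.trans hlazy) ▸ R.lt_lw ρ).le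
  · have hwσ : R.winner σ = R.winner ρ := Option.some_injective _ (hnonlazy.symm.trans hW)
    by_contra! hlt
    exact hnot ⟨R.loserE ρ, R.loser ρ, R.vtx ρ, R.loserE_mem ρ, hvL, hE ▸ hvW,
      hE ▸ hLW, hL, hwσ ▸ (R.lt_lw ρ).ne, hlt⟩

theorem loser_le_of_succ {σ ρ : Fin n} (hρ : ρ.1 = σ.1 + 1) : R.loser ρ ≤ R.loser σ := by
  by_cases hL : R.newE σ = R.loserE ρ
  · exact loser_le_of_newE_eq_loserE hρ hL
  by_cases hW : R.newE σ = R.winnerE ρ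
  · exact loser_le_of_newE_eq_winnerE hρ hW
  have hlab : ∀ e, e ≠ R.newE σ → R.lab σ.1 e = R.lab ρ.1 e := fun e he =>
    hρ ▸ (R.step_frame σ e he).symm
  have hN : R.lab σ.1 (R.newE ρ) = none := by
    by_cases hNσ : R.newE ρ = R.newE σ
    · rw [hNσ, R.newE_unlabeled]
    · rw [hlab _ hNσ, R.newE_unlabeled]
  obtain ⟨hvL, hvW, hvN⟩ := R.vtx_mem ρ
  obtain ⟨hLW, hLN, hWN⟩ := R.edges_distinct ρ
  exact R.max_rule σ _ _ _ _ _ _ (R.loserE_mem ρ) (R.winnerE_mem ρ) (R.newE_mem ρ)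
    ((hlab _ (Ne.symm hL)).trans (R.lab_loserE ρ))
    ((hlab _ (Ne.symm hW)).trans (R.lab_winnerE ρ))
    hN (R.lt_lw ρ) hvL hvW hvN hLW hLN hWN

theorem loser_antitone : Antitone R.loser := by
  cases n with
  | zero => exact fun σ => σ.elim0
  | succ m => exact Fin.antitone_iff_succ_le.mpr fun σ => loser_le_of_succ rfl

end Run

theorem winners_win_general (n : ℕ) (T : PreTree (n+3) (2*n+4))
    (R : Run n T) (j : Fin (n+3)) (t0 : Fin n)
    (hwin : R.winner t0 = j)
    (hfirst : ∀ t : Fin n, t < t0 → R.loser t ≠ j ∧ R.winner t ≠ j) :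
    ∀ t : Fin n, (R.loser t = j ∨ R.winner t = j) → R.winner t = j := by
  rintro t (hlose | hwin')
  · have hbelow : R.loser t0 < j := hwin ▸ R.lt_lw t0
    rcases lt_or_ge t t0 with hbefore | hafter
    · exact absurd hlose (hfirst t hbefore).1
    · exact absurd (hlose ▸ R.loser_antitone hafter) hbelow.not_ge
  · exact hwin'

/-- **Winners Lemma.** If a label wins the first round in which it competes,
it wins all subsequent rounds in which it competes. -/
theorem winners_win (n : ℕ) (T : PreTree (n+3) (2*n+4)) (hT : T.IsTrivalent)
    (R : Run n T) (j : Fin (n+3)) (t0 : Fin n)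
    (hwin : R.winner t0 = j)
    (hfirst : ∀ t : Fin n, t < t0 → R.loser t ≠ j ∧ R.winner t ≠ j) :
    ∀ t : Fin n, (R.loser t = j ∨ R.winner t = j) → R.winner t = j :=
  winners_win_general n T R j t0 hwin hfirst
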